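/- arXiv:1709.01547 — 2 statements merged into one kernel-verified Lean document; each statement's English description precedes it below -/
import Mathlib

section
/- Under the hypotheses: y_1, ..., y_m ∈ ℝ^n with 1−ε ≤ ‖y_i‖ ≤ 1, β_2(m−1) ≤ ∑_{j≠i}⟨y_i, y_j⟩ ≤ β_1(m−1) for all i, (1−ε)² + β_2(m−1) > 0, and ȳ = (1/m)∑ y_i; the linear functional ℓ(x) = ⟨ȳ/‖ȳ‖, x⟩ − (1/√m)·((1−ε)² + β_2(m−1))/√(1 + (m−1)β_1) satisfies ℓ(y_i) ≥ 0 for every i = 1, ..., m. -/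
/-!
Let `S = ∑ j, y j`, so that `ȳ / ‖ȳ‖ = S / ‖S‖`. Each
`⟪S, y k⟫ = ‖y k‖² + ∑_{j ≠ k} ⟪y k, y j⟫` lies between `A = (1 - ε)² + β₂ (m - 1)` and
`B = 1 + (m - 1) β₁`. Summing the upper bound over `k` gives `‖S‖² ≤ m B`, hence
`⟪S / ‖S‖, y i⟫ ≥ A / √(m B)`.
-/

open Finset

section Cluster

variable {E ι : Type*} [NormedAddCommGroup E] [InnerProductSpace ℝ E] [Fintype ι] [DecidableEq ι]

theorem inner_sum_eq_norm_sq_add_sum_erase (y : ι → E) (i : ι) :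
    inner ℝ (∑ j, y j) (y i) = ‖y i‖ ^ 2 + ∑ j ∈ univ.erase i, inner ℝ (y i) (y j) := by
  rw [sum_inner, ← add_sum_erase _ _ (mem_univ i), real_inner_self_eq_norm_sq]
  exact congrArg _ (sum_congr rfl fun j _ => real_inner_comm _ _)

theorem sq_add_le_inner_sum {y : ι → E} {i : ι} {a β : ℝ} (ha : 0 ≤ a) (hy : a ≤ ‖y i‖)
    (hβ : β ≤ ∑ j ∈ univ.erase i, inner ℝ (y i) (y j)) :
    a ^ 2 + β ≤ inner ℝ (∑ j, y j) (y i) := by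
  rw [inner_sum_eq_norm_sq_add_sum_erase]
  gcongr

theorem inner_sum_le_one_add {y : ι → E} {i : ι} {β : ℝ} (hy : ‖y i‖ ≤ 1)
    (hβ : ∑ j ∈ univ.erase i, inner ℝ (y i) (y j) ≤ β) :
    inner ℝ (∑ j, y j) (y i) ≤ 1 + β := by
  rw [inner_sum_eq_norm_sq_add_sum_erase]
  have : ‖y i‖ ^ 2 ≤ 1 := pow_le_one₀ (norm_nonneg _) hy
  linarith

omit [DecidableEq ι] in
theorem norm_sum_le_sqrt_card_mul_sqrt {y : ι → E} {B : ℝ}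
    (hB : ∀ k, inner ℝ (∑ j, y j) (y k) ≤ B) :
    ‖∑ j, y j‖ ≤ √(Fintype.card ι) * √B := by
  have hsq : ‖∑ j, y j‖ ^ 2 ≤ Fintype.card ι * B := by
    rw [← real_inner_self_eq_norm_sq, inner_sum]
    simpa using sum_le_sum fun k (_ : k ∈ univ) => hB k
  rw [← Real.sqrt_mul (Nat.cast_nonneg _), ← Real.sqrt_sq (norm_nonneg _)]
  exact Real.sqrt_le_sqrt hsq

end Cluster

theorem div_le_inner_normalize {E : Type*} [NormedAddCommGroup E] [InnerProductSpace ℝ E]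
    {v x : E} {A D : ℝ} (hA : 0 < A) (hAv : A ≤ inner ℝ v x) (hvD : ‖v‖ ≤ D) :
    A / D ≤ inner ℝ (NormedSpace.normalize v) x := by
  have hv : 0 < ‖v‖ := norm_pos_iff.mpr fun h => by simp [h] at hAv; linarith
  rw [NormedSpace.normalize, real_inner_smul_left, inv_mul_eq_div]
  exact div_le_div₀ (hA.le.trans hAv) hAv hv hvD

theorem functional_nonneg_on_cluster_general (n m : ℕ) (ε : ℝ)
    (hε : ε ∈ Set.Ioo (0:ℝ) 1)
    (β₁ β₂ : ℝ)
    (hpos : (1 - ε)^2 + β₂ * ((m:ℝ) - 1) > 0)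
    (y : Fin m → EuclideanSpace ℝ (Fin n))
    (hlo : ∀ i, 1 - ε ≤ ‖y i‖) (hhi : ∀ i, ‖y i‖ ≤ 1)
    (hcorr : ∀ i, β₂ * ((m:ℝ) - 1) ≤ ∑ j ∈ univ.erase i, (inner ℝ (y i) (y j) : ℝ) ∧
        ∑ j ∈ univ.erase i, (inner ℝ (y i) (y j) : ℝ) ≤ β₁ * ((m:ℝ) - 1)) :
    ∀ i, 0 ≤ (inner ℝ (‖(1/(m:ℝ)) • ∑ j, y j‖⁻¹ • ((1/(m:ℝ)) • ∑ j, y j)) (y i) : ℝ) -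
        (1 / Real.sqrt m) *
          (((1 - ε)^2 + β₂ * ((m:ℝ) - 1)) / Real.sqrt (1 + ((m:ℝ) - 1) * β₁)) := by
  intro i
  have hlow : (1 - ε) ^ 2 + β₂ * ((m:ℝ) - 1) ≤ inner ℝ (∑ j, y j) (y i) :=
    sq_add_le_inner_sum (sub_nonneg.mpr hε.2.le) (hlo i) (hcorr i).1
  have hnorm : ‖∑ j, y j‖ ≤ √m * √(1 + ((m:ℝ) - 1) * β₁) := by
    simpa [mul_comm β₁] using
      norm_sum_le_sqrt_card_mul_sqrt fun k => inner_sum_le_one_add (hhi k) (hcorr k).2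
  have hmean : ‖(1/(m:ℝ)) • ∑ j, y j‖⁻¹ • ((1/(m:ℝ)) • ∑ j, y j) =
      NormedSpace.normalize (∑ j, y j) :=
    NormedSpace.normalize_smul_of_pos (by simp [i.pos]) _
  rw [hmean, sub_nonneg, one_div_mul_eq_div, div_right_comm, div_div]
  exact div_le_inner_normalize hpos hlow hnorm

/-- The separating functional built from the mean of a positively correlated cluster is
nonnegative on every member of the cluster. -/
theorem functional_nonneg_on_cluster (n m : ℕ) (hm : 1 ≤ m) (ε : ℝ)
    (hε : ε ∈ Set.Ioo (0:ℝ) 1)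
    (β₁ β₂ : ℝ) (hβ : β₁ ≥ β₂) (hβ₂ : β₂ > 0)
    (hpos : (1 - ε)^2 + β₂ * ((m:ℝ) - 1) > 0)
    (y : Fin m → EuclideanSpace ℝ (Fin n))
    (hlo : ∀ i, 1 - ε ≤ ‖y i‖) (hhi : ∀ i, ‖y i‖ ≤ 1)
    (hcorr : ∀ i, β₂ * ((m:ℝ) - 1) ≤ ∑ j ∈ univ.erase i, (inner ℝ (y i) (y j) : ℝ) ∧
        ∑ j ∈ univ.erase i, (inner ℝ (y i) (y j) : ℝ) ≤ β₁ * ((m:ℝ) - 1)) :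
    ∀ i, 0 ≤ (inner ℝ (‖(1/(m:ℝ)) • ∑ j, y j‖⁻¹ • ((1/(m:ℝ)) • ∑ j, y j)) (y i) : ℝ) -
        (1 / Real.sqrt m) *
          (((1 - ε)^2 + β₂ * ((m:ℝ) - 1)) / Real.sqrt (1 + ((m:ℝ) - 1) * β₁)) :=
  functional_nonneg_on_cluster_general n m ε hε β₁ β₂ hpos y hlo hhi hcorr
end

section
/- Let z_1, ..., z_M, z be i.i.d. random vectors in ℝ^d whose coordinates are independent random variables taking values in [0,1], each coordinate j having variance σ_j² > σ_0² > 0. If M ≤ (ϑ/3)·exp(d·σ_0⁴/2) − 1 for some ϑ ∈ (0,1), then with probability greater than 1 − ϑ there exists an affine functional ℓ with ℓ(z) ≥ 0 and ℓ(z_i) < 0 for all i = 1, ..., M. -/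
/-!
Let `m` be the mean vector and `s z = ‖z - m‖²`. The functional `ℓ x = ⟨z - m, x - m⟩ - s z`
vanishes at `z`, so it separates as soon as `⟨z - m, zᵢ - m⟩ < s z` for every `i`. Both
`s z` and `⟨z - m, y - m⟩` are sums of independent centred coordinates bounded by `1`, for which
`𝔼 e^X ≤ e^{𝔼 X²}` gives Chernoff bounds with the variances in the exponent. Since each
coordinate variance is at least `4σ₀⁴`, the first bound makes `s z ≤ 4c/3` (with `c = dσ₀⁴/2`)
an event of probability at most `e^{-c}`, and the second makes `⟨z - m, zᵢ - m⟩ ≥ s z` one of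
probability at most `e^{-3 s z/4} ≤ e^{-c}`. A union bound over these `M + 1` events costs
`(M + 1) e^{-c} ≤ ϑ/3`.
-/

open MeasureTheory Finset ProbabilityTheory Real
open scoped ENNReal

lemma integral_exp_le_exp_integral_sq {Ω : Type*} [MeasurableSpace Ω] {μ : Measure Ω}
    [IsProbabilityMeasure μ] {X : Ω → ℝ} (hX : AEStronglyMeasurable X μ)
    (hb : ∀ᵐ ω ∂μ, |X ω| ≤ 1) (h0 : ∫ ω, X ω ∂μ = 0) :
    ∫ ω, exp (X ω) ∂μ ≤ exp (∫ ω, X ω ^ 2 ∂μ) := by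
  have hXi : Integrable X μ := .of_bound hX 1 hb
  have hX1 : Integrable (fun ω => 1 + X ω) μ := (integrable_const 1).add hXi
  have hX2 : Integrable (fun ω => X ω ^ 2) μ := .of_bound (hX.pow 2) 1 <| by
    filter_upwards [hb] with ω h
    rw [Real.norm_of_nonneg (sq_nonneg _)]
    exact (sq_le_one_iff_abs_le_one _).2 h
  calc ∫ ω, exp (X ω) ∂μ ≤ ∫ ω, 1 + X ω + X ω ^ 2 ∂μ := by
        refine integral_mono_of_nonneg (.of_forall fun ω => (exp_pos _).le)
          (hX1.add hX2) ?_
        filter_upwards [hb] with ω h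
        linarith [(abs_le.1 (abs_exp_sub_one_sub_id_le h)).2]
    _ = 1 + ∫ ω, X ω ^ 2 ∂μ := by
        rw [integral_add hX1 hX2, integral_add (integrable_const 1) hXi, h0]
        simp
    _ ≤ exp (∫ ω, X ω ^ 2 ∂μ) := by linarith [add_one_le_exp (∫ ω, X ω ^ 2 ∂μ)]

lemma measure_pi_le_sum_le_exp {ι : Type*} [Fintype ι] {Ω : ι → Type*}
    [∀ i, MeasurableSpace (Ω i)] {μ : ∀ i, Measure (Ω i)} [∀ i, IsProbabilityMeasure (μ i)]
    {g : ∀ i, Ω i → ℝ} (hg : ∀ i, Measurable (g i)) (hb : ∀ i, ∀ᵐ x ∂μ i, |g i x| ≤ 1)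
    (h0 : ∀ i, ∫ x, g i x ∂μ i = 0) (t : ℝ) :
    Measure.pi μ {x | t ≤ ∑ i, g i (x i)} ≤
      ENNReal.ofReal (exp (∑ i, ∫ x, g i x ^ 2 ∂μ i - t)) := by
  have hexp_int : ∀ i, Integrable (fun x => exp (g i x)) (μ i) := fun i =>
    .of_bound (by fun_prop) (exp 1) <| by
      filter_upwards [hb i] with x h
      simpa using (abs_le.1 h).2
  have hmgf : mgf (fun x => ∑ i, g i (x i)) (Measure.pi μ) 1 = ∏ i, ∫ x, exp (g i x) ∂μ i := by
    simp only [mgf, one_mul, exp_sum]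
    exact integral_fintype_prod_eq_prod (fun i x => exp (g i x))
  have hint : Integrable (fun x => exp (1 * ∑ i, g i (x i))) (Measure.pi μ) := by
    simpa only [one_mul, exp_sum] using Integrable.fintype_prod_dep hexp_int
  rw [← ofReal_measureReal]
  refine ENNReal.ofReal_le_ofReal ?_
  calc (Measure.pi μ).real {x | t ≤ ∑ i, g i (x i)}
      ≤ exp (-1 * t) * mgf (fun x => ∑ i, g i (x i)) (Measure.pi μ) 1 :=
        measure_ge_le_exp_mul_mgf t zero_le_one hint
    _ ≤ exp (-t) * exp (∑ i, ∫ x, g i x ^ 2 ∂μ i) := by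
        rw [hmgf, exp_sum, neg_one_mul]
        gcongr with i
        exact integral_exp_le_exp_integral_sq (hg i).aestronglyMeasurable (hb i) (h0 i)
    _ = exp (∑ i, ∫ x, g i x ^ 2 ∂μ i - t) := by rw [← exp_add]; ring_nf

lemma variance_id_eq_integral (ν : Measure ℝ) :
    variance (fun x => x) ν = ∫ x, (x - ∫ y, y ∂ν) ^ 2 ∂ν :=
  variance_eq_integral aemeasurable_id

section UnitInterval

variable {ν : Measure ℝ} [IsProbabilityMeasure ν]

lemma integrable_id_of_ae_mem_Icc (h : ∀ᵐ x ∂ν, x ∈ Set.Icc (0:ℝ) 1) :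
    Integrable (fun x => x) ν :=
  .of_bound aestronglyMeasurable_id 1 <| by
    filter_upwards [h] with x hx
    exact abs_le.2 ⟨by linarith [hx.1], hx.2⟩

lemma integral_id_mem_Icc_of_ae_mem (h : ∀ᵐ x ∂ν, x ∈ Set.Icc (0:ℝ) 1) :
    ∫ x, x ∂ν ∈ Set.Icc (0:ℝ) 1 :=
  (convex_Icc 0 1).integral_mem isClosed_Icc h (integrable_id_of_ae_mem_Icc h)

lemma abs_sub_integral_id_le_one (h : ∀ᵐ x ∂ν, x ∈ Set.Icc (0:ℝ) 1) {x : ℝ}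
    (hx : x ∈ Set.Icc (0:ℝ) 1) : |x - ∫ y, y ∂ν| ≤ 1 := by
  have hm := integral_id_mem_Icc_of_ae_mem h
  exact abs_sub_le_iff.2 ⟨by linarith [hx.2, hm.1], by linarith [hx.1, hm.2]⟩

lemma ae_abs_sub_integral_id_le_one (h : ∀ᵐ x ∂ν, x ∈ Set.Icc (0:ℝ) 1) :
    ∀ᵐ x ∂ν, |x - ∫ y, y ∂ν| ≤ 1 := by
  filter_upwards [h] with x hx using abs_sub_integral_id_le_one h hx

lemma ae_sq_sub_integral_id_le_one (h : ∀ᵐ x ∂ν, x ∈ Set.Icc (0:ℝ) 1) :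
    ∀ᵐ x ∂ν, (x - ∫ y, y ∂ν) ^ 2 ≤ 1 := by
  filter_upwards [ae_abs_sub_integral_id_le_one h] with x hx
    using (sq_le_one_iff_abs_le_one _).2 hx

lemma integrable_sq_sub_integral_id (h : ∀ᵐ x ∂ν, x ∈ Set.Icc (0:ℝ) 1) :
    Integrable (fun x => (x - ∫ y, y ∂ν) ^ 2) ν :=
  .of_bound (by fun_prop) 1 <| by
    filter_upwards [ae_sq_sub_integral_id_le_one h] with x hx
    rwa [Real.norm_of_nonneg (sq_nonneg _)]

lemma variance_id_le_quarter (h : ∀ᵐ x ∂ν, x ∈ Set.Icc (0:ℝ) 1) :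
    variance (fun x => x) ν ≤ 1 / 4 := by
  convert variance_le_sq_of_bounded h aemeasurable_id using 1
  norm_num

lemma four_mul_sq_le_variance_id (h : ∀ᵐ x ∂ν, x ∈ Set.Icc (0:ℝ) 1) {a : ℝ} (ha : 0 ≤ a)
    (hav : a ≤ variance (fun x => x) ν) : 4 * a ^ 2 ≤ variance (fun x => x) ν := by
  nlinarith [variance_id_le_quarter h]

lemma integral_sq_sub_mean_sub_variance_sq_le (h : ∀ᵐ x ∂ν, x ∈ Set.Icc (0:ℝ) 1) :
    ∫ x, ((x - ∫ y, y ∂ν) ^ 2 - variance (fun x => x) ν) ^ 2 ∂ν ≤ variance (fun x => x) ν := by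
  set Y : ℝ → ℝ := fun x => (x - ∫ y, y ∂ν) ^ 2
  have hY : AEStronglyMeasurable Y ν := by fun_prop
  have hmean : ∫ x, Y x ∂ν = variance (fun x => x) ν := (variance_id_eq_integral ν).symm
  calc ∫ x, (Y x - variance (fun x => x) ν) ^ 2 ∂ν = variance Y ν := by
        rw [variance_eq_integral hY.aemeasurable, hmean]
    _ ≤ ∫ x, Y x ^ 2 ∂ν := variance_le_expectation_sq hY
    _ ≤ ∫ x, Y x ∂ν := by
        refine integral_mono_of_nonneg (.of_forall fun x => sq_nonneg _)
          (integrable_sq_sub_integral_id h) ?_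
        filter_upwards [ae_sq_sub_integral_id_le_one h] with x hx
        nlinarith [sq_nonneg (x - ∫ y, y ∂ν)]
    _ = variance (fun x => x) ν := hmean

end UnitInterval

section UnitCube

variable {ι : Type*} [Fintype ι]

def cubeFarFromMean (ν : ι → Measure ℝ) (r : ℝ) : Set (ι → ℝ) :=
  {z | (∀ j, z j ∈ Set.Icc (0:ℝ) 1) ∧ r < ∑ j, (z j - ∫ x, x ∂ν j) ^ 2}

lemma measurableSet_cubeFarFromMean (ν : ι → Measure ℝ) (r : ℝ) :
    MeasurableSet (cubeFarFromMean ν r) := by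
  unfold cubeFarFromMean
  measurability

variable {ν : ι → Measure ℝ} [∀ j, IsProbabilityMeasure (ν j)]

lemma measure_pi_sum_sq_sub_mean_le_le_exp (h : ∀ j, ∀ᵐ x ∂ν j, x ∈ Set.Icc (0:ℝ) 1) (r : ℝ) :
    Measure.pi ν {z | ∑ j, (z j - ∫ x, x ∂ν j) ^ 2 ≤ r} ≤
      ENNReal.ofReal (exp (r / 2 - (∑ j, variance (fun x => x) (ν j)) / 4)) := by
  set m : ι → ℝ := fun j => ∫ x, x ∂ν j
  set v : ι → ℝ := fun j => variance (fun x => x) (ν j)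
  set g : ι → ℝ → ℝ := fun j x => (v j - (x - m j) ^ 2) / 2
  have hb : ∀ j, ∀ᵐ x ∂ν j, |g j x| ≤ 1 := fun j => by
    have := variance_id_le_quarter (h j)
    have := variance_nonneg (fun x : ℝ => x) (ν j)
    filter_upwards [ae_sq_sub_integral_id_le_one (h j)] with x hx
    simp only [g]
    exact abs_le.2 ⟨by nlinarith [sq_nonneg (x - m j)], by nlinarith [sq_nonneg (x - m j)]⟩
  have h0 : ∀ j, ∫ x, g j x ∂ν j = 0 := fun j => by
    rw [integral_div, integral_sub (integrable_const _) (integrable_sq_sub_integral_id (h j)),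
      integral_const, ← variance_id_eq_integral]
    simp [v]
  have hvar : ∀ j, ∫ x, g j x ^ 2 ∂ν j ≤ v j / 4 := fun j => by
    have := integral_sq_sub_mean_sub_variance_sq_le (h j)
    calc ∫ x, g j x ^ 2 ∂ν j = (∫ x, ((x - m j) ^ 2 - v j) ^ 2 ∂ν j) / 4 := by
          rw [← integral_div]; congr 1 with x; simp only [g]; ring
      _ ≤ v j / 4 := by gcongr
  calc Measure.pi ν {z | ∑ j, (z j - m j) ^ 2 ≤ r}
      ≤ Measure.pi ν {z | (∑ j, v j - r) / 2 ≤ ∑ j, g j (z j)} := by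
        refine measure_mono fun z hz => ?_
        simp only [Set.mem_ofPred_eq, g, ← Finset.sum_div, Finset.sum_sub_distrib] at hz ⊢
        linarith
    _ ≤ ENNReal.ofReal (exp (∑ j, ∫ x, g j x ^ 2 ∂ν j - (∑ j, v j - r) / 2)) :=
        measure_pi_le_sum_le_exp (fun j => by fun_prop) hb h0 _
    _ ≤ ENNReal.ofReal (exp (r / 2 - (∑ j, v j) / 4)) := by
        have := Finset.sum_le_sum fun j (_ : j ∈ univ) => hvar j
        rw [← Finset.sum_div] at this
        exact ENNReal.ofReal_le_ofReal (exp_le_exp.2 (by linarith))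

lemma measure_pi_le_sum_mul_sub_mean_le_exp (h : ∀ j, ∀ᵐ x ∂ν j, x ∈ Set.Icc (0:ℝ) 1)
    {w : ι → ℝ} (hw : ∀ j, |w j| ≤ 1) (t : ℝ) :
    Measure.pi ν {y | t ≤ ∑ j, w j * (y j - ∫ x, x ∂ν j)} ≤
      ENNReal.ofReal (exp ((∑ j, w j ^ 2) / 4 - t)) := by
  set m : ι → ℝ := fun j => ∫ x, x ∂ν j
  have hb : ∀ j, ∀ᵐ x ∂ν j, |w j * (x - m j)| ≤ 1 := fun j => by
    filter_upwards [ae_abs_sub_integral_id_le_one (h j)] with x hx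
    rw [abs_mul]
    exact mul_le_one₀ (hw j) (abs_nonneg _) hx
  have h0 : ∀ j, ∫ x, w j * (x - m j) ∂ν j = 0 := fun j => by
    rw [integral_const_mul, integral_sub (integrable_id_of_ae_mem_Icc (h j)) (integrable_const _),
      integral_const]
    simp [m]
  have hvar : ∀ j, ∫ x, (w j * (x - m j)) ^ 2 ∂ν j ≤ w j ^ 2 / 4 := fun j => by
    simp_rw [mul_pow]
    rw [integral_const_mul, ← variance_id_eq_integral]
    nlinarith [variance_id_le_quarter (h j), sq_nonneg (w j)]
  refine (measure_pi_le_sum_le_exp (fun j => by fun_prop) hb h0 t).trans ?_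
  have := Finset.sum_le_sum fun j (_ : j ∈ univ) => hvar j
  rw [← Finset.sum_div] at this
  exact ENNReal.ofReal_le_ofReal (exp_le_exp.2 (by linarith))

lemma measure_pi_compl_cubeFarFromMean_le (h : ∀ j, ∀ᵐ x ∂ν j, x ∈ Set.Icc (0:ℝ) 1) (r : ℝ) :
    Measure.pi ν (cubeFarFromMean ν r)ᶜ ≤
      ENNReal.ofReal (exp (r / 2 - (∑ j, variance (fun x => x) (ν j)) / 4)) := by
  have hcube : ∀ᵐ z ∂Measure.pi ν, ∀ j, z j ∈ Set.Icc (0:ℝ) 1 :=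
    ae_all_iff.2 fun j => Measure.tendsto_eval_ae_ae.eventually (h j)
  refine (measure_mono_ae ?_).trans (measure_pi_sum_sq_sub_mean_le_le_exp h r)
  filter_upwards [hcube] with z hz hzr using le_of_not_gt fun hr => hzr ⟨hz, hr⟩

lemma measure_pi_sum_sq_sub_mean_le_inner_le (h : ∀ j, ∀ᵐ x ∂ν j, x ∈ Set.Icc (0:ℝ) 1)
    {r : ℝ} {z : ι → ℝ} (hz : z ∈ cubeFarFromMean ν r) :
    Measure.pi ν {y | ∑ j, (z j - ∫ x, x ∂ν j) ^ 2 ≤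
        ∑ j, (z j - ∫ x, x ∂ν j) * (y j - ∫ x, x ∂ν j)} ≤
      ENNReal.ofReal (exp (-(3 * r / 4))) :=
  (measure_pi_le_sum_mul_sub_mean_le_exp h (fun j => abs_sub_integral_id_le_one (h j) (hz.1 j))
    _).trans (ENNReal.ofReal_le_ofReal (exp_le_exp.2 (by linarith [hz.2])))

end UnitCube

lemma one_sub_le_measure_mem_and_forall_not_mem {ι E : Type*} [Fintype ι] [MeasurableSpace E]
    (P : Measure E) [IsProbabilityMeasure P] {G : Set E} (hG : MeasurableSet G)
    {R : Set (E × E)} (hR : MeasurableSet R) {ε : ℝ≥0∞} (hGc : P Gᶜ ≤ ε)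
    (hRG : ∀ z ∈ G, P {y | (z, y) ∈ R} ≤ ε) :
    1 - (Fintype.card ι + 1) * ε ≤
      ((Measure.pi fun _ : ι => P).prod P) {p | p.2 ∈ G ∧ ∀ i, (p.2, p.1 i) ∉ R} := by
  set Q := (Measure.pi fun _ : ι => P).prod P
  set S := {p : (ι → E) × E | p.2 ∈ G ∧ ∀ i, (p.2, p.1 i) ∉ R}
  set B : ι → Set ((ι → E) × E) := fun i => {p | p.2 ∈ G ∧ (p.2, p.1 i) ∈ R}
  have hB0 : Q (Prod.snd ⁻¹' Gᶜ) ≤ ε := by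
    rw [← Set.univ_prod, Measure.prod_prod, measure_univ, one_mul]
    exact hGc
  have hB : ∀ i, Q (B i) ≤ ε := fun i => by
    have hBi : MeasurableSet (B i) := (hG.preimage measurable_snd).inter
      (hR.preimage (measurable_snd.prodMk ((measurable_pi_apply i).comp measurable_fst)))
    rw [Measure.prod_apply_symm hBi]
    calc ∫⁻ z, Measure.pi (fun _ => P) ((fun x => (x, z)) ⁻¹' B i) ∂P
        ≤ ∫⁻ _, ε ∂P := lintegral_mono fun z => ?_
      _ = ε := by simp
    by_cases hz : z ∈ G
    · have : (fun x => (x, z)) ⁻¹' B i = Function.eval i ⁻¹' {y : E | (z, y) ∈ R} := by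
        ext x; simp [B, hz]
      rw [this, (measurePreserving_eval _ i).measure_preimage
        (measurable_prodMk_left hR).nullMeasurableSet]
      exact hRG z hz
    · simp [B, hz]
  have hcompl : Sᶜ = Prod.snd ⁻¹' Gᶜ ∪ ⋃ i, B i := by
    ext p
    simp only [S, B, Set.mem_compl_iff, Set.mem_ofPred_eq, not_and, not_forall, not_not,
      Set.preimage_compl, Set.mem_union, Set.mem_preimage, Set.mem_iUnion, exists_and_left]
    tauto
  have hbad : Q Sᶜ ≤ (Fintype.card ι + 1) * ε :=
    calc _ ≤ Q (Prod.snd ⁻¹' Gᶜ) + Q (⋃ i, B i) := hcompl ▸ measure_union_le _ _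
      _ ≤ ε + ∑ _i : ι, ε := add_le_add hB0 ((measure_iUnion_fintype_le _ _).trans
          (Finset.sum_le_sum fun i _ => hB i))
      _ = (Fintype.card ι + 1) * ε := by simp [add_mul, add_comm]
  have := measure_univ_le_add_compl (μ := Q) Sᶜ
  rw [measure_univ, compl_compl] at this
  exact (tsub_le_tsub_left hbad 1).trans (tsub_le_iff_left.2 this)

lemma exists_affine_separation_of_inner_lt {ι κ : Type*} [Fintype ι] (m z : ι → ℝ)
    (y : κ → ι → ℝ) (h : ∀ i, ∑ j, (z j - m j) * (y i j - m j) < ∑ j, (z j - m j) ^ 2) :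
    ∃ (u : ι → ℝ) (c : ℝ), 0 ≤ (∑ j, u j * z j) - c ∧ ∀ i, (∑ j, u j * y i j) - c < 0 := by
  set c := ∑ j, (z j - m j) * m j + ∑ j, (z j - m j) ^ 2
  have hℓ : ∀ x : ι → ℝ, ∑ j, (z - m) j * x j - c =
      ∑ j, (z j - m j) * (x j - m j) - ∑ j, (z j - m j) ^ 2 := fun x => by
    simp only [c, Pi.sub_apply, mul_sub, Finset.sum_sub_distrib]
    ring
  refine ⟨z - m, c, ?_, fun i => ?_⟩
  · have := hℓ z
    simp only [sq, sub_self] at this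
    linarith
  · linarith [hℓ (y i), h i]

lemma ofReal_one_sub_lt_one_sub_mul_ofReal_exp_neg {M : ℕ} {ϑ c : ℝ}
    (hϑ : ϑ ∈ Set.Ioo (0:ℝ) 1) (hM : (M : ℝ) ≤ ϑ / 3 * exp c - 1) :
    ENNReal.ofReal (1 - ϑ) < 1 - (M + 1) * ENNReal.ofReal (exp (-c)) := by
  have hMc : ((M : ℝ) + 1) * exp (-c) ≤ ϑ / 3 := by
    rw [exp_neg, ← div_eq_mul_inv, div_le_iff₀ (exp_pos c)]
    linarith
  calc ENNReal.ofReal (1 - ϑ) < 1 - ENNReal.ofReal (ϑ / 3) := by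
        rw [← ENNReal.ofReal_one, ← ENNReal.ofReal_sub _ (by linarith [hϑ.1])]
        exact (ENNReal.ofReal_lt_ofReal_iff (by linarith [hϑ.2])).2 (by linarith [hϑ.1])
    _ ≤ 1 - ENNReal.ofReal (((M : ℝ) + 1) * exp (-c)) :=
        tsub_le_tsub_left (ENNReal.ofReal_le_ofReal hMc) 1
    _ = 1 - (M + 1) * ENNReal.ofReal (exp (-c)) := by
        rw [ENNReal.ofReal_mul (by positivity)]
        norm_cast

theorem product_measure_separation_general (d M : ℕ)
    (ν : Fin d → Measure ℝ) (hprob : ∀ j, IsProbabilityMeasure (ν j))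
    (hsupp : ∀ j, ν j (Set.Icc (0:ℝ) 1) = 1)
    (σ : Fin d → ℝ) (σ₀ : ℝ)
    (hvar : ∀ j, variance (fun x => x) (ν j) = (σ j)^2)
    (hσ : ∀ j, σ₀^2 < (σ j)^2)
    (ϑ : ℝ) (hϑ : ϑ ∈ Set.Ioo (0:ℝ) 1)
    (hM : (M:ℝ) ≤ (ϑ/3) * Real.exp ((d:ℝ) * σ₀^4 / 2) - 1) :
    ENNReal.ofReal (1 - ϑ) <
      ((Measure.pi fun _ : Fin M => Measure.pi ν).prod (Measure.pi ν))
        {p : (Fin M → (Fin d → ℝ)) × (Fin d → ℝ) |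
          ∃ (u : Fin d → ℝ) (c : ℝ),
            0 ≤ (∑ j, u j * p.2 j) - c ∧
            ∀ i, (∑ j, u j * p.1 i j) - c < 0} := by
  have hcube : ∀ j, ∀ᵐ x ∂ν j, x ∈ Set.Icc (0:ℝ) 1 := fun j =>
    (ae_mem_iff_measure_eq measurableSet_Icc.nullMeasurableSet).2 (by simp [hsupp])
  set m : Fin d → ℝ := fun j => ∫ x, x ∂ν j
  set c : ℝ := d * σ₀ ^ 4 / 2
  have hV : 8 * c ≤ ∑ j, variance (fun x => x) (ν j) :=
    calc 8 * c = ∑ _j : Fin d, 4 * (σ₀ ^ 2) ^ 2 := by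
          simp only [c, Finset.sum_const, card_univ, Fintype.card_fin, nsmul_eq_mul]; ring
      _ ≤ _ := Finset.sum_le_sum fun j _ =>
        four_mul_sq_le_variance_id (hcube j) (sq_nonneg σ₀) ((hσ j).le.trans (hvar j).ge)
  have hGc : Measure.pi ν (cubeFarFromMean ν (4 * c / 3))ᶜ ≤ ENNReal.ofReal (exp (-c)) :=
    (measure_pi_compl_cubeFarFromMean_le hcube _).trans
      (ENNReal.ofReal_le_ofReal (exp_le_exp.2 (by linarith [show 0 ≤ c by positivity])))
  set R : Set ((Fin d → ℝ) × (Fin d → ℝ)) :=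
    {q | ∑ j, (q.1 j - m j) ^ 2 ≤ ∑ j, (q.1 j - m j) * (q.2 j - m j)}
  have hRG : ∀ z ∈ cubeFarFromMean ν (4 * c / 3),
      Measure.pi ν {y | (z, y) ∈ R} ≤ ENNReal.ofReal (exp (-c)) := fun z hz =>
    (measure_pi_sum_sq_sub_mean_le_inner_le hcube hz).trans_eq (by ring_nf)
  have hgood := one_sub_le_measure_mem_and_forall_not_mem (ι := Fin M) (Measure.pi ν)
    (measurableSet_cubeFarFromMean ν _) (by measurability : MeasurableSet R) hGc hRG
  rw [Fintype.card_fin] at hgood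
  refine (ofReal_one_sub_lt_one_sub_mul_ofReal_exp_neg hϑ hM).trans_le
    (hgood.trans (measure_mono fun p hp => ?_))
  exact exists_affine_separation_of_inner_lt m p.2 p.1 fun i => lt_of_not_ge (hp.2 i)

/-- Separation theorem for product distributions on the unit cube (core of Theorem 3):
if `z_1, …, z_M, z` are i.i.d. random vectors in `ℝ^d` whose coordinates are independent,
supported in `[0,1]`, with coordinate variances `σ_j² > σ_0² > 0`, and
`M ≤ (ϑ/3)·exp(d σ_0⁴/2) − 1`, then with probability greater than `1 − ϑ` some affine
functional is nonnegative at `z` and negative at every `z_i`. -/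
theorem product_measure_separation (d M : ℕ) (hd : 0 < d)
    (ν : Fin d → Measure ℝ) (hprob : ∀ j, IsProbabilityMeasure (ν j))
    (hsupp : ∀ j, ν j (Set.Icc (0:ℝ) 1) = 1)
    (σ : Fin d → ℝ) (σ₀ : ℝ) (hσ₀ : 0 < σ₀)
    (hvar : ∀ j, variance (fun x => x) (ν j) = (σ j)^2)
    (hσ : ∀ j, σ₀^2 < (σ j)^2)
    (ϑ : ℝ) (hϑ : ϑ ∈ Set.Ioo (0:ℝ) 1)
    (hM : (M:ℝ) ≤ (ϑ/3) * Real.exp ((d:ℝ) * σ₀^4 / 2) - 1) :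
    ENNReal.ofReal (1 - ϑ) <
      ((Measure.pi fun _ : Fin M => Measure.pi ν).prod (Measure.pi ν))
        {p : (Fin M → (Fin d → ℝ)) × (Fin d → ℝ) |
          ∃ (u : Fin d → ℝ) (c : ℝ),
            0 ≤ (∑ j, u j * p.2 j) - c ∧
            ∀ i, (∑ j, u j * p.1 i j) - c < 0} :=
  product_measure_separation_general d M ν hprob hsupp σ σ₀ hvar hσ ϑ hϑ hM
end
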